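/- Let X be a measurable space, μ a probability measure on X, f* : X → ℝ measurable, and q : X × ℝ → [0,∞) measurable such that for each x, q(x,·) is a probability density on ℝ that is twice continuously differentiable in the second variable, with B := sup_{x∈X, t∈ℝ} |∂²_t q(x,t)| < ∞ (Assumption 1). Let φ : ℝ → [0,∞) be bounded, even, with ∫_ℝ φ(u) du = 1 and ∫_ℝ u² φ(u) du < ∞ (calibrated modal regression kernel). Then for every measurable f : X → ℝ and every σ > 0, | (R(f*) − R(f)) − (R^σ(f*) − R^σ(f)) | ≤ c₁ σ², where c₁ = B · ∫_ℝ u² φ(u) du (Theorem 4.2, the modal regression calibration/comparison theorem). -/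

import Mathlib

/-!
After the substitution `t = b + σ u`, the smoothed risk integrand `∫ φ(u) q(x, b + σ u) du` is
compared with `q(x, b)` by a second-order Taylor expansion of `q(x, ·)` at `b`: the zeroth-order
term reproduces `q(x, b)` because `∫ φ = 1`, the first-order term vanishes because `φ` is even,
and the remainder is at most `B σ² u² / 2`. Hence `R(g)` and `R^σ(g)` differ by at most
`B σ² ∫ u² φ / 2` for every measurable `g`; apply this to `g = f*` and `g = f`. Integrability
over `μ` holds because a probability density on `ℝ` whose second derivative is bounded by `B` is
itself bounded, by `1/2 + B/6`.
-/

open MeasureTheory Set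

theorem abs_sub_sub_mul_deriv_le_of_abs_deriv_deriv_le {g : ℝ → ℝ} (hg : ContDiff ℝ 2 g)
    {B : ℝ} (hB : ∀ t, |deriv (deriv g) t| ≤ B) (a s : ℝ) :
    |g (a + s) - g a - s * deriv g a| ≤ B * s ^ 2 / 2 := by
  rcases eq_or_ne s 0 with rfl | hs
  · simp
  have has : a ≠ a + s := by simpa using hs
  obtain ⟨c, -, hc⟩ := taylor_mean_remainder_lagrange_iteratedDeriv (n := 1) has hg.contDiffOn
  have hderiv : derivWithin g (uIcc a (a + s)) a = deriv g a :=
    ((hg.differentiable two_ne_zero) a).derivWithin (uniqueDiffOn_uIcc has a left_mem_uIcc)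
  have hlagrange : g (a + s) - g a - s * deriv g a = deriv (deriv g) c * s ^ 2 / 2 := by
    simpa [taylor_within_apply, Finset.sum_range_succ, iteratedDeriv_succ, hderiv, sub_sub,
      mul_comm] using hc
  rw [hlagrange, abs_div, abs_mul, abs_of_nonneg (sq_nonneg s), abs_two]
  gcongr
  exact hB c

theorem le_half_integral_add_of_abs_deriv_deriv_le {g : ℝ → ℝ} (hg : ContDiff ℝ 2 g) {B : ℝ}
    (hB : ∀ t, |deriv (deriv g) t| ≤ B) (hg_nonneg : ∀ t, 0 ≤ g t) (hg_int : Integrable g)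
    (t₀ : ℝ) : g t₀ ≤ (∫ t, g t) / 2 + B / 6 := by
  have hlower : ∀ s, g t₀ + s * deriv g t₀ - B * s ^ 2 / 2 ≤ g (t₀ + s) := fun s => by
    linarith [(abs_le.mp (abs_sub_sub_mul_deriv_le_of_abs_deriv_deriv_le hg hB t₀ s)).1]
  have hpoly :
      (∫ s in (-1 : ℝ)..1, (g t₀ + s * deriv g t₀ - B * s ^ 2 / 2)) = 2 * g t₀ - B / 3 := by
    have hii : ∀ h : ℝ → ℝ, Continuous h → IntervalIntegrable h volume (-1) 1 :=
      fun h hh => hh.intervalIntegrable _ _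
    rw [intervalIntegral.integral_sub (hii _ (by fun_prop)) (hii _ (by fun_prop)),
      intervalIntegral.integral_add (hii _ (by fun_prop)) (hii _ (by fun_prop))]
    simp only [intervalIntegral.integral_const, intervalIntegral.integral_mul_const,
      intervalIntegral.integral_div, integral_id, smul_eq_mul]
    norm_num
    ring
  have hwindow : (∫ s in (-1 : ℝ)..1, g (t₀ + s)) ≤ ∫ t, g t := by
    rw [intervalIntegral.integral_comp_add_left, intervalIntegral.integral_of_le (by linarith)]
    exact setIntegral_le_integral hg_int (.of_forall hg_nonneg)
  have hmono : (∫ s in (-1 : ℝ)..1, (g t₀ + s * deriv g t₀ - B * s ^ 2 / 2))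
      ≤ ∫ s in (-1 : ℝ)..1, g (t₀ + s) :=
    intervalIntegral.integral_mono_on (by norm_num)
      (Continuous.intervalIntegrable (by fun_prop) _ _)
      ((hg.continuous.comp (continuous_const_add t₀)).intervalIntegrable _ _) fun s _ => hlower s
  linarith

theorem integral_one_div_mul_comp_sub_div_mul_eq (φ g : ℝ → ℝ) (b : ℝ) {σ : ℝ} (hσ : 0 < σ) :
    (∫ t, (1 / σ) * φ ((t - b) / σ) * g t) = ∫ u, φ u * g (b + σ * u) := by
  set G : ℝ → ℝ := fun u => φ u * g (b + σ * u)
  have hshift : ∀ t, (1 / σ) * φ ((t - b) / σ) * g t = (1 / σ) * G ((t - b) / σ) := fun t => by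
    simp only [G, mul_div_cancel₀ _ hσ.ne', add_sub_cancel]
    ring
  simp_rw [hshift]
  rw [integral_const_mul, integral_sub_right_eq_self (fun t => G (t / σ)) b,
    Measure.integral_comp_div, abs_of_pos hσ, smul_eq_mul, ← mul_assoc,
    one_div_mul_cancel hσ.ne', one_mul]

theorem integral_mul_eq_zero_of_even {φ : ℝ → ℝ} (hφ_even : ∀ u, φ (-u) = φ u) :
    ∫ u, u * φ u = 0 := by
  have h := integral_neg_eq_self (fun u : ℝ => u * φ u) volume
  simp only [hφ_even, neg_mul, integral_neg] at h
  linarith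

theorem integrable_mul_of_integrable_sq_mul {φ : ℝ → ℝ} (hφ : Integrable φ)
    (hφ_mom : Integrable fun u => u ^ 2 * φ u) : Integrable fun u => u * φ u := by
  refine (hφ.norm.add hφ_mom.norm).mono' (continuous_id.aestronglyMeasurable.mul
    hφ.aestronglyMeasurable) (.of_forall fun u => ?_)
  have hu : |u| ≤ 1 + u ^ 2 := by nlinarith [sq_nonneg (|u| - 1), sq_abs u]
  simp only [Pi.add_apply, norm_mul, norm_pow, Real.norm_eq_abs, sq_abs]
  nlinarith [abs_nonneg (φ u)]

theorem abs_sub_integral_mul_comp_add_mul_le {g φ : ℝ → ℝ} (hg : ContDiff ℝ 2 g) {B : ℝ}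
    (hB : ∀ t, |deriv (deriv g) t| ≤ B) (hφ_nonneg : ∀ u, 0 ≤ φ u) (hφ_even : ∀ u, φ (-u) = φ u)
    (hφ : Integrable φ) (hφ_int : ∫ u, φ u = 1) (hφ_mom : Integrable fun u => u ^ 2 * φ u)
    (b σ : ℝ) :
    |g b - ∫ u, φ u * g (b + σ * u)| ≤ B * (∫ u, u ^ 2 * φ u) * σ ^ 2 / 2 := by
  set r : ℝ → ℝ := fun u => φ u * (g (b + σ * u) - g b - σ * u * deriv g b)
  have hr_le : ∀ u, ‖r u‖ ≤ B * σ ^ 2 / 2 * (u ^ 2 * φ u) := fun u => by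
    rw [Real.norm_eq_abs, abs_mul, abs_of_nonneg (hφ_nonneg u)]
    calc φ u * |g (b + σ * u) - g b - σ * u * deriv g b| ≤ φ u * (B * (σ * u) ^ 2 / 2) :=
          mul_le_mul_of_nonneg_left
            (abs_sub_sub_mul_deriv_le_of_abs_deriv_deriv_le hg hB b (σ * u)) (hφ_nonneg u)
      _ = B * σ ^ 2 / 2 * (u ^ 2 * φ u) := by ring
  have hr : Integrable r := (hφ_mom.const_mul _).mono'
    (hφ.aestronglyMeasurable.mul (by fun_prop)) (.of_forall hr_le)
  have hsplit : (fun u => φ u * g (b + σ * u))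
      = fun u => g b * φ u + σ * deriv g b * (u * φ u) + r u := by
    ext u; ring
  have hrest : g b - ∫ u, φ u * g (b + σ * u) = -∫ u, r u := by
    have h₁ : Integrable fun u => g b * φ u := hφ.const_mul _
    have h₂ : Integrable fun u => σ * deriv g b * (u * φ u) :=
      (integrable_mul_of_integrable_sq_mul hφ hφ_mom).const_mul _
    rw [hsplit, integral_add (f := fun u => g b * φ u + σ * deriv g b * (u * φ u))
      (h₁.add h₂) hr, integral_add h₁ h₂, integral_const_mul, integral_const_mul, hφ_int,
      integral_mul_eq_zero_of_even hφ_even]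
    ring
  calc |g b - ∫ u, φ u * g (b + σ * u)| = ‖∫ u, r u‖ := by rw [hrest, abs_neg, Real.norm_eq_abs]
    _ ≤ ∫ u, B * σ ^ 2 / 2 * (u ^ 2 * φ u) :=
        norm_integral_le_of_norm_le (hφ_mom.const_mul _) (.of_forall hr_le)
    _ = B * (∫ u, u ^ 2 * φ u) * σ ^ 2 / 2 := by rw [integral_const_mul]; ring

theorem abs_integral_sub_integral_integral_mul_comp_add_mul_le {X : Type*} [MeasurableSpace X]
    (μ : Measure X) [IsProbabilityMeasure μ] {q : X → ℝ → ℝ}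
    (hq_meas : Measurable (Function.uncurry q)) {C : ℝ} (hq_bdd : ∀ x t, |q x t| ≤ C)
    (hq_smooth : ∀ x, ContDiff ℝ 2 (q x)) {B : ℝ} (hB : ∀ x t, |deriv (deriv (q x)) t| ≤ B)
    {φ : ℝ → ℝ} (hφ_meas : Measurable φ) (hφ_nonneg : ∀ u, 0 ≤ φ u)
    (hφ_even : ∀ u, φ (-u) = φ u) (hφ : Integrable φ) (hφ_int : ∫ u, φ u = 1)
    (hφ_mom : Integrable fun u => u ^ 2 * φ u) {g : X → ℝ} (hg : Measurable g) (σ : ℝ) :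
    |∫ x, q x (g x) ∂μ - ∫ x, (∫ u, φ u * q x (g x + σ * u)) ∂μ|
      ≤ B * (∫ u, u ^ 2 * φ u) * σ ^ 2 / 2 := by
  have hpoint : ∀ x, |q x (g x) - ∫ u, φ u * q x (g x + σ * u)|
      ≤ B * (∫ u, u ^ 2 * φ u) * σ ^ 2 / 2 := fun x =>
    abs_sub_integral_mul_comp_add_mul_le (hq_smooth x) (hB x) hφ_nonneg hφ_even hφ hφ_int
      hφ_mom (g x) σ
  have hF : Integrable (fun x => q x (g x)) μ :=
    .of_bound (hq_meas.comp (measurable_id.prodMk hg)).aestronglyMeasurable C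
      (.of_forall fun x => hq_bdd x (g x))
  have hK_meas : StronglyMeasurable fun x => ∫ u, φ u * q x (g x + σ * u) :=
    (((hφ_meas.comp measurable_snd).mul (hq_meas.comp (measurable_fst.prodMk
      ((hg.comp measurable_fst).add (measurable_snd.const_mul σ))))).stronglyMeasurable
      ).integral_prod_right'
  have hK : Integrable (fun x => ∫ u, φ u * q x (g x + σ * u)) μ :=
    .of_bound hK_meas.aestronglyMeasurable (C + B * (∫ u, u ^ 2 * φ u) * σ ^ 2 / 2)
      (.of_forall fun x => calc
        _ = |q x (g x) - (q x (g x) - ∫ u, φ u * q x (g x + σ * u))| := by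
          rw [sub_sub_cancel, Real.norm_eq_abs]
        _ ≤ |q x (g x)| + |q x (g x) - ∫ u, φ u * q x (g x + σ * u)| := abs_sub _ _
        _ ≤ _ := add_le_add (hq_bdd x (g x)) (hpoint x))
  rw [← integral_sub hF hK, ← Real.norm_eq_abs]
  simpa using norm_integral_le_of_norm_le_const (μ := μ)
    (.of_forall fun x => (Real.norm_eq_abs _).trans_le (hpoint x))

theorem modal_regression_calibration_general
    {X : Type*} [MeasurableSpace X] (μ : Measure X) [IsProbabilityMeasure μ]
    (fstar : X → ℝ) (hfstar : Measurable fstar)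
    (q : X → ℝ → ℝ) (hq_meas : Measurable (Function.uncurry q))
    (hq_nonneg : ∀ x t, 0 ≤ q x t) (hq_int : ∀ x, ∫ t, q x t = 1)
    (hq_smooth : ∀ x, ContDiff ℝ 2 (q x))
    (B : ℝ) (hB : ∀ x t, |deriv (deriv (q x)) t| ≤ B)
    (φ : ℝ → ℝ) (hφ_meas : Measurable φ) (hφ_nonneg : ∀ u, 0 ≤ φ u)
    (hφ_even : ∀ u, φ (-u) = φ u)
    (hφ_int : ∫ u, φ u = 1)
    (hφ_mom : Integrable (fun u => u ^ 2 * φ u))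
    (f : X → ℝ) (hf : Measurable f) (σ : ℝ) (hσ : 0 < σ) :
    |((∫ x, q x (fstar x - fstar x) ∂μ) - ∫ x, q x (f x - fstar x) ∂μ)
        - ((∫ x, (∫ t, (1 / σ) * φ ((t - (fstar x - fstar x)) / σ) * q x t) ∂μ)
            - ∫ x, (∫ t, (1 / σ) * φ ((t - (f x - fstar x)) / σ) * q x t) ∂μ)|
      ≤ (B * ∫ u, u ^ 2 * φ u) * σ ^ 2 := by
  have hφ : Integrable φ := .of_integral_ne_zero (by simp [hφ_int])
  have hq_bdd : ∀ x t, |q x t| ≤ 1 / 2 + B / 6 := fun x t => by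
    simpa [abs_of_nonneg (hq_nonneg x t), hq_int x] using
      le_half_integral_add_of_abs_deriv_deriv_le (hq_smooth x) (hB x) (hq_nonneg x)
        (.of_integral_ne_zero (by simp [hq_int x])) t
  have hsmoothing {g : X → ℝ} (hg : Measurable g) :=
    abs_integral_sub_integral_integral_mul_comp_add_mul_le μ hq_meas hq_bdd hq_smooth hB hφ_meas
      hφ_nonneg hφ_even hφ hφ_int hφ_mom hg σ
  have h₀ := hsmoothing (g := fun x => fstar x - fstar x) (by fun_prop)
  have h₁ := hsmoothing (g := fun x => f x - fstar x) (by fun_prop)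
  simp only [integral_one_div_mul_comp_sub_div_mul_eq φ _ _ hσ]
  rw [abs_le] at h₀ h₁ ⊢
  constructor <;> linarith

/-- Theorem 4.2 (modal regression calibration / comparison theorem): under
Assumption 1 on the conditional noise densities and for a calibrated modal
regression kernel with representing function `φ`, the excess modal regression
risk and the excess generalization risk differ by at most `c₁ σ²`, where
`c₁ = B·∫ u² φ(u) du` and `B` bounds `|∂²_t q(x,t)|`. -/
theorem modal_regression_calibration
    {X : Type*} [MeasurableSpace X] (μ : Measure X) [IsProbabilityMeasure μ]
    (fstar : X → ℝ) (hfstar : Measurable fstar)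
    (q : X → ℝ → ℝ) (hq_meas : Measurable (Function.uncurry q))
    (hq_nonneg : ∀ x t, 0 ≤ q x t) (hq_int : ∀ x, ∫ t, q x t = 1)
    (hq_smooth : ∀ x, ContDiff ℝ 2 (q x))
    (B : ℝ) (hB : ∀ x t, |deriv (deriv (q x)) t| ≤ B)
    (φ : ℝ → ℝ) (hφ_meas : Measurable φ) (hφ_nonneg : ∀ u, 0 ≤ φ u)
    (hφ_bdd : ∃ Cφ : ℝ, ∀ u, φ u ≤ Cφ)
    (hφ_even : ∀ u, φ (-u) = φ u)
    (hφ_int : ∫ u, φ u = 1)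
    (hφ_mom : Integrable (fun u => u ^ 2 * φ u))
    (f : X → ℝ) (hf : Measurable f) (σ : ℝ) (hσ : 0 < σ) :
    |((∫ x, q x (fstar x - fstar x) ∂μ) - ∫ x, q x (f x - fstar x) ∂μ)
        - ((∫ x, (∫ t, (1 / σ) * φ ((t - (fstar x - fstar x)) / σ) * q x t) ∂μ)
            - ∫ x, (∫ t, (1 / σ) * φ ((t - (f x - fstar x)) / σ) * q x t) ∂μ)|
      ≤ (B * ∫ u, u ^ 2 * φ u) * σ ^ 2 :=
  modal_regression_calibration_general μ fstar hfstar q hq_meas hq_nonneg hq_int hq_smooth B hB φ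
    hφ_meas hφ_nonneg hφ_even hφ_int hφ_mom f hf σ hσ
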